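/- Let d ≥ 1 and let Ω ⊆ ℝ^d be a connected open set. Suppose u, v : Ω → ℝ^d are maps of class C¹ such that (∇u(x))ᵀ ∇u(x) = (∇v(x))ᵀ ∇v(x) for all x ∈ Ω, this common matrix is positive definite at every point, and det ∇u(x) > 0 and det ∇v(x) > 0 for all x ∈ Ω. Then there exist R ∈ SO(d) and c ∈ ℝ^d such that v(x) = R u(x) + c for all x ∈ Ω; that is, orientation-preserving equidimensional isometric immersions of a given metric are unique up to rigid motions. -/

import Mathlib

/-!
Write `Φ(x) = ∇v(x) ∇u(x)⁻¹`; the metric condition says that each `Φ(x)` is an orthogonal map.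
Near `u(x₀)` the map `w = v ∘ u⁻¹` has derivative `Φ ∘ u⁻¹`, so `w` and (by the inverse function
theorem) its local inverse are both `1`-Lipschitz on small balls: `w` preserves distances there.
Polarizing, `⟪w a - w y₀, w y - w y₀⟫ = ⟪a - y₀, y - y₀⟫`, and differentiating in `y` at `y₀`
shows that `w` is affine near `y₀`. Hence `Φ` is locally constant, thus constant `= R` on the
connected set `Ω`, and `v - R u` has derivative zero. Finally `R` is orthogonal because
`∇uᵀ ∇u = ∇uᵀ Rᵀ R ∇u`, and `det R > 0` because `det ∇v = det R · det ∇u`.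
-/

noncomputable section
open Matrix Set

/-- The Jacobian matrix (d×d) of a map `u : ℝᵈ → ℝᵈ` at a point `x`. -/
def Jac {d : ℕ} (u : EuclideanSpace ℝ (Fin d) → EuclideanSpace ℝ (Fin d))
    (x : EuclideanSpace ℝ (Fin d)) : Matrix (Fin d) (Fin d) ℝ :=
  Matrix.of fun i j => fderiv ℝ u x (EuclideanSpace.single j 1) i

open Filter Topology RealInnerProductSpace

section InnerProductSpace

variable {E F : Type*} [NormedAddCommGroup E] [InnerProductSpace ℝ E]
  [NormedAddCommGroup F] [InnerProductSpace ℝ F]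

theorem Convex.norm_image_sub_le_of_hasFDerivAt_norm_map {f : E → F} {s : Set E}
    (hs : Convex ℝ s) (hf : ∀ x ∈ s, ∃ L : E →L[ℝ] F, HasFDerivAt f L x ∧ ∀ p, ‖L p‖ = ‖p‖)
    {a b : E} (ha : a ∈ s) (hb : b ∈ s) : ‖f a - f b‖ ≤ ‖a - b‖ := by
  have hbound : ∀ x ∈ s, ‖fderiv ℝ f x‖ ≤ 1 := fun x hx => by
    obtain ⟨L, hfL, hL⟩ := hf x hx
    rw [hfL.fderiv]
    exact L.opNorm_le_bound zero_le_one fun p => by rw [hL, one_mul]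
  simpa using hs.norm_image_sub_le_of_norm_fderiv_le
    (fun x hx => (hf x hx).elim fun _ h => h.1.differentiableAt) hbound hb ha

theorem ContinuousLinearMap.norm_comp_inverse_apply {A B : E →L[ℝ] F} (hA : A.IsInvertible)
    (h : ∀ p, ‖A p‖ = ‖B p‖) (q : F) : ‖(B ∘L A.inverse) q‖ = ‖q‖ := by
  rw [ContinuousLinearMap.comp_apply, ← h, hA.self_apply_inverse]

theorem eqOn_affine_of_norm_sub_eq {f : E → F} {L : E →L[ℝ] F} {U : Set E} {y₀ : E}
    (hU : U ∈ 𝓝 y₀) (hf : ∀ a ∈ U, ∀ b ∈ U, ‖f a - f b‖ = ‖a - b‖)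
    (hfL : HasFDerivAt f L y₀) (hL : ∀ p, ‖L p‖ = ‖p‖) (hLs : Function.Surjective L) :
    ∀ a ∈ U, f a = f y₀ + L (a - y₀) := by
  intro a ha
  have hpolar : ∀ y ∈ U, ⟪a - y₀, y - y₀⟫ = ⟪f a - f y₀, f y - f y₀⟫ := by
    intro y hy
    simp only [real_inner_eq_norm_mul_self_add_norm_mul_self_sub_norm_sub_mul_self_div_two,
      sub_sub_sub_cancel_right, hf a ha y₀ (mem_of_mem_nhds hU), hf y hy y₀ (mem_of_mem_nhds hU),
      hf a ha y hy]
  have hderiv : ∀ k, ⟪a - y₀, k⟫ = ⟪f a - f y₀, L k⟫ := by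
    have h₁ := (innerSL ℝ (a - y₀)).hasFDerivAt.comp y₀ ((hasFDerivAt_id y₀).sub_const y₀)
    have h₂ := (innerSL ℝ (f a - f y₀)).hasFDerivAt.comp y₀ (hfL.sub_const (f y₀))
    exact fun k => congr($(h₁.unique (h₂.congr_of_eventuallyEq (eventually_of_mem hU hpolar))) k)
  let Li : E →ₗᵢ[ℝ] F := { toLinearMap := L, norm_map' := hL }
  rw [← sub_eq_iff_eq_add']
  refine ext_inner_right ℝ fun q => ?_
  obtain ⟨k, rfl⟩ := hLs q
  exact (hderiv k).symm.trans (Li.inner_map_map _ _).symm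

variable [CompleteSpace E]

theorem HasStrictFDerivAt.exists_openPartialHomeomorph {f : E → F} {f' : E →L[ℝ] F} {x : E}
    (hf : HasStrictFDerivAt f f' x) (hf' : f'.IsInvertible) :
    ∃ φ : OpenPartialHomeomorph E F, x ∈ φ.source ∧ ⇑φ = f := by
  obtain ⟨e, rfl⟩ := hf'
  exact ⟨hf.toOpenPartialHomeomorph f, hf.mem_toOpenPartialHomeomorph_source,
    hf.toOpenPartialHomeomorph_coe⟩

theorem exists_mem_nhds_norm_sub_eq_of_hasStrictFDerivAt_norm_map {f : E → F}
    {f' : E → E →L[ℝ] F} {s : Set E} (hs : IsOpen s) (hf : ∀ x ∈ s, HasStrictFDerivAt f (f' x) x)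
    (hinv : ∀ x ∈ s, (f' x).IsInvertible) (hiso : ∀ x ∈ s, ∀ p, ‖f' x p‖ = ‖p‖)
    {x : E} (hx : x ∈ s) : ∃ U ∈ 𝓝 x, ∀ a ∈ U, ∀ b ∈ U, ‖f a - f b‖ = ‖a - b‖ := by
  obtain ⟨φ, hxφ, rfl⟩ := (hf x hx).exists_openPartialHomeomorph (hinv x hx)
  obtain ⟨r, hr, hrs⟩ := Metric.isOpen_iff.1 (hs.inter φ.open_source) x ⟨hx, hxφ⟩
  obtain ⟨ρ, hρ, hρT⟩ := Metric.isOpen_iff.1 (φ.isOpen_inter_preimage_symm Metric.isOpen_ball)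
    (φ x) ⟨φ.map_source hxφ, by rw [mem_preimage, φ.left_inv hxφ]; exact Metric.mem_ball_self hr⟩
  have hφ_le : ∀ a ∈ Metric.ball x r, ∀ b ∈ Metric.ball x r, ‖φ a - φ b‖ ≤ ‖a - b‖ :=
    fun a ha b hb => (convex_ball x r).norm_image_sub_le_of_hasFDerivAt_norm_map
      (fun y hy => ⟨f' y, (hf y (hrs hy).1).hasFDerivAt, hiso y (hrs hy).1⟩) ha hb
  have hsymm_le : ∀ a ∈ Metric.ball (φ x) ρ, ∀ b ∈ Metric.ball (φ x) ρ,
      ‖φ.symm a - φ.symm b‖ ≤ ‖a - b‖ := by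
    refine fun a ha b hb => (convex_ball (φ x) ρ).norm_image_sub_le_of_hasFDerivAt_norm_map
      (fun z hz => ?_) ha hb
    obtain ⟨hzφ, hzr⟩ := hρT hz
    obtain ⟨e, he⟩ := hinv _ (hrs hzr).1
    refine ⟨e.symm, φ.hasFDerivAt_symm hzφ (he ▸ (hf _ (hrs hzr).1).hasFDerivAt), fun q => ?_⟩
    simpa [← he] using (hiso _ (hrs hzr).1 (e.symm q)).symm
  refine ⟨Metric.ball x r ∩ φ ⁻¹' Metric.ball (φ x) ρ, inter_mem (Metric.ball_mem_nhds x hr)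
    (φ.continuousAt hxφ (Metric.ball_mem_nhds _ hρ)), fun a ha b hb => ?_⟩
  refine le_antisymm (hφ_le a ha.1 b hb.1) ?_
  calc ‖a - b‖ = ‖φ.symm (φ a) - φ.symm (φ b)‖ := by
        rw [φ.left_inv (hrs ha.1).2, φ.left_inv (hrs hb.1).2]
    _ ≤ ‖φ a - φ b‖ := hsymm_le _ ha.2 _ hb.2

theorem eventually_eq_of_hasStrictFDerivAt_norm_map {f : E → F} {f' : E → E →L[ℝ] F}
    {s : Set E} (hs : IsOpen s) (hf : ∀ x ∈ s, HasStrictFDerivAt f (f' x) x)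
    (hinv : ∀ x ∈ s, (f' x).IsInvertible) (hiso : ∀ x ∈ s, ∀ p, ‖f' x p‖ = ‖p‖)
    {x : E} (hx : x ∈ s) : ∀ᶠ y in 𝓝 x, f' y = f' x := by
  obtain ⟨U, hU, hUf⟩ :=
    exists_mem_nhds_norm_sub_eq_of_hasStrictFDerivAt_norm_map hs hf hinv hiso hx
  have haff : f =ᶠ[𝓝 x] fun a => f x + f' x (a - x) := eventually_of_mem hU <|
    eqOn_affine_of_norm_sub_eq hU hUf (hf x hx).hasFDerivAt (hiso x hx) (hinv x hx).surjective
  filter_upwards [haff.eventuallyEq_nhds, hs.mem_nhds hx] with y hy hys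
  have hlin := ((f' x).hasFDerivAt.comp y ((hasFDerivAt_id y).sub_const x)).const_add (f x)
  exact (hf y hys).hasFDerivAt.unique (hlin.congr_of_eventuallyEq hy)

variable [CompleteSpace F]

theorem eventually_comp_inverse_eq {Ω : Set E} (hΩo : IsOpen Ω) {u v : E → F}
    {u' v' : E → E →L[ℝ] F} (hu : ∀ x ∈ Ω, HasStrictFDerivAt u (u' x) x)
    (hv : ∀ x ∈ Ω, HasStrictFDerivAt v (v' x) x) (hu' : ∀ x ∈ Ω, (u' x).IsInvertible)
    (hv' : ∀ x ∈ Ω, (v' x).IsInvertible) (heq : ∀ x ∈ Ω, ∀ p, ‖u' x p‖ = ‖v' x p‖)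
    {x₀ : E} (hx₀ : x₀ ∈ Ω) :
    ∀ᶠ x in 𝓝 x₀, v' x ∘L (u' x).inverse = v' x₀ ∘L (u' x₀).inverse := by
  obtain ⟨φ, hx₀φ, rfl⟩ := (hu x₀ hx₀).exists_openPartialHomeomorph (hu' x₀ hx₀)
  have hw : ∀ y ∈ φ.target ∩ φ.symm ⁻¹' Ω,
      HasStrictFDerivAt (v ∘ φ.symm) (v' (φ.symm y) ∘L (u' (φ.symm y)).inverse) y := by
    rintro y ⟨hyφ, hyΩ⟩
    obtain ⟨e, he⟩ := hu' _ hyΩ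
    rw [← he, ContinuousLinearMap.inverse_equiv]
    exact (hv _ hyΩ).comp y (φ.hasStrictFDerivAt_symm hyφ (he ▸ hu _ hyΩ))
  have hloc := eventually_eq_of_hasStrictFDerivAt_norm_map
    (f' := fun y => v' (φ.symm y) ∘L (u' (φ.symm y)).inverse)
    (φ.isOpen_inter_preimage_symm hΩo) hw (fun y hy => (hv' _ hy.2).comp (hu' _ hy.2).inverse)
    (fun y hy => ContinuousLinearMap.norm_comp_inverse_apply (hu' _ hy.2) (heq _ hy.2))
    (x := φ x₀) ⟨φ.map_source hx₀φ, by rwa [mem_preimage, φ.left_inv hx₀φ]⟩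
  simp only [φ.left_inv hx₀φ] at hloc
  filter_upwards [φ.continuousAt hx₀φ hloc, φ.open_source.mem_nhds hx₀φ] with x hx hxφ
  rwa [mem_preimage, mem_ofPred_eq, φ.left_inv hxφ] at hx

theorem exists_eq_comp_add_of_norm_hasStrictFDerivAt_eq {Ω : Set E} (hΩo : IsOpen Ω)
    (hΩc : IsPreconnected Ω) {u v : E → F} {u' v' : E → E →L[ℝ] F}
    (hu : ∀ x ∈ Ω, HasStrictFDerivAt u (u' x) x) (hv : ∀ x ∈ Ω, HasStrictFDerivAt v (v' x) x)
    (hu' : ∀ x ∈ Ω, (u' x).IsInvertible) (hv' : ∀ x ∈ Ω, (v' x).IsInvertible)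
    (heq : ∀ x ∈ Ω, ∀ p, ‖u' x p‖ = ‖v' x p‖) :
    ∃ (R : F →L[ℝ] F) (c : F), (∀ x ∈ Ω, v' x = R ∘L u' x) ∧ ∀ x ∈ Ω, v x = R (u x) + c := by
  rcases Ω.eq_empty_or_nonempty with rfl | ⟨x₀, hx₀⟩
  · exact ⟨0, 0, by simp, by simp⟩
  set R := v' x₀ ∘L (u' x₀).inverse
  have hR : ∀ x ∈ Ω, v' x = R ∘L u' x := by
    intro x hx
    have hΦ : v' x ∘L (u' x).inverse = R :=
      hΩc.induction₂ (fun x y => v' x ∘L (u' x).inverse = v' y ∘L (u' y).inverse)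
        (fun x hx => nhdsWithin_le_nhds
          ((eventually_comp_inverse_eq hΩo hu hv hu' hv' heq hx).mono fun _ => Eq.symm))
        (fun _ _ _ _ _ _ => Eq.trans) (fun _ _ _ _ => Eq.symm) hx hx₀
    rw [← hΦ, ContinuousLinearMap.comp_assoc, (hu' x hx).inverse_comp_self,
      ContinuousLinearMap.comp_id]
  have hRu : ∀ x ∈ Ω, HasFDerivAt (fun x => R (u x)) (R ∘L u' x) x :=
    fun x hx => R.hasFDerivAt.comp x (hu x hx).hasFDerivAt
  obtain ⟨c, hc⟩ := hΩo.exists_eq_add_of_fderiv_eq hΩc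
    (fun x hx => (hv x hx).differentiableAt.differentiableWithinAt)
    (fun x hx => (hRu x hx).differentiableAt.differentiableWithinAt)
    (fun x hx => by rw [(hv x hx).hasFDerivAt.fderiv, (hRu x hx).fderiv, hR x hx])
  exact ⟨R, c, hR, hc⟩

end InnerProductSpace

theorem toEuclideanCLM_Jac {d : ℕ} (u : EuclideanSpace ℝ (Fin d) → EuclideanSpace ℝ (Fin d))
    (x : EuclideanSpace ℝ (Fin d)) : toEuclideanCLM (𝕜 := ℝ) (Jac u x) = fderiv ℝ u x :=
  ContinuousLinearMap.coe_injective <|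
    (EuclideanSpace.basisFun (Fin d) ℝ).toBasis.ext fun j => by ext i; simp [Jac]

theorem ContDiffOn.hasStrictFDerivAt_toEuclideanCLM_Jac {d : ℕ}
    {f : EuclideanSpace ℝ (Fin d) → EuclideanSpace ℝ (Fin d)} {Ω : Set (EuclideanSpace ℝ (Fin d))}
    (hf : ContDiffOn ℝ 1 f Ω) (hΩ : IsOpen Ω) {x : EuclideanSpace ℝ (Fin d)} (hx : x ∈ Ω) :
    HasStrictFDerivAt f (toEuclideanCLM (𝕜 := ℝ) (Jac f x)) x := by
  rw [toEuclideanCLM_Jac]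
  exact (hf.contDiffAt (hΩ.mem_nhds hx)).hasStrictFDerivAt one_ne_zero

namespace Matrix

variable {n : Type*} [Fintype n] [DecidableEq n]

theorem isInvertible_toEuclideanCLM {𝕜 : Type*} [RCLike 𝕜] {A : Matrix n n 𝕜} (hA : A.det ≠ 0) :
    (toEuclideanCLM (𝕜 := 𝕜) A).IsInvertible := by
  obtain ⟨w, hw⟩ := ((A.isUnit_iff_isUnit_det).2 hA.isUnit).map (toEuclideanCLM (n := n) (𝕜 := 𝕜))
  exact ⟨.ofUnit w, hw⟩

theorem norm_toEuclideanCLM_apply_eq {A B : Matrix n n ℝ} (h : Aᵀ * A = Bᵀ * B)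
    (p : EuclideanSpace ℝ n) : ‖toEuclideanCLM (𝕜 := ℝ) A p‖ = ‖toEuclideanCLM (𝕜 := ℝ) B p‖ := by
  have hsq : ∀ C : Matrix n n ℝ,
      ‖toEuclideanCLM (𝕜 := ℝ) C p‖ ^ 2 = ⟪p, toEuclideanCLM (𝕜 := ℝ) (Cᵀ * C) p⟫ := by
    intro C
    rw [ContinuousLinearMap.apply_norm_sq_eq_inner_adjoint_right,
      ← ContinuousLinearMap.star_eq_adjoint, ← map_star, star_eq_conjTranspose,
      conjTranspose_eq_transpose_of_trivial, map_mul]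
    rfl
  rw [← sq_eq_sq₀ (norm_nonneg _) (norm_nonneg _), hsq, hsq, h]

theorem transpose_mul_self_eq_one_of_transpose_mul_self_eq {A B M : Matrix n n ℝ} (hA : IsUnit A)
    (h : Aᵀ * A = Bᵀ * B) (hB : B = M * A) : Mᵀ * M = 1 := by
  subst hB
  refine hA.mul_right_cancel ((isUnit_transpose A).2 hA |>.mul_left_cancel ?_)
  simpa [Matrix.mul_assoc] using h.symm

theorem det_eq_one_of_transpose_mul_self_eq_one {M : Matrix n n ℝ} (hM : Mᵀ * M = 1)
    (hpos : 0 < M.det) : M.det = 1 := by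
  have := congrArg det hM
  rw [det_mul, det_transpose, det_one] at this
  nlinarith

end Matrix

theorem equidimensional_rigidity_general (d : ℕ)
    (Ω : Set (EuclideanSpace ℝ (Fin d))) (hΩo : IsOpen Ω) (hΩc : IsConnected Ω)
    (u v : EuclideanSpace ℝ (Fin d) → EuclideanSpace ℝ (Fin d))
    (hu : ContDiffOn ℝ 1 u Ω) (hv : ContDiffOn ℝ 1 v Ω)
    (heq : ∀ x ∈ Ω, (Jac u x)ᵀ * Jac u x = (Jac v x)ᵀ * Jac v x)
    (hdu : ∀ x ∈ Ω, 0 < (Jac u x).det)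
    (hdv : ∀ x ∈ Ω, 0 < (Jac v x).det) :
    ∃ (R : Matrix (Fin d) (Fin d) ℝ) (c : Fin d → ℝ),
      Rᵀ * R = 1 ∧ R.det = 1 ∧
      ∀ x ∈ Ω, ∀ i : Fin d, v x i = (∑ j : Fin d, R i j * u x j) + c i := by
  obtain ⟨R, c, hR, hc⟩ := exists_eq_comp_add_of_norm_hasStrictFDerivAt_eq hΩo
    hΩc.isPreconnected (fun x hx => hu.hasStrictFDerivAt_toEuclideanCLM_Jac hΩo hx)
    (fun x hx => hv.hasStrictFDerivAt_toEuclideanCLM_Jac hΩo hx)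
    (fun x hx => isInvertible_toEuclideanCLM (hdu x hx).ne')
    (fun x hx => isInvertible_toEuclideanCLM (hdv x hx).ne')
    (fun x hx => norm_toEuclideanCLM_apply_eq (heq x hx))
  obtain ⟨x₀, hx₀⟩ := hΩc.nonempty
  obtain ⟨M, rfl⟩ := EquivLike.surjective (toEuclideanCLM (𝕜 := ℝ) (n := Fin d)) R
  have hM : Jac v x₀ = M * Jac u x₀ :=
    EquivLike.injective (toEuclideanCLM (𝕜 := ℝ) (n := Fin d)) (by rw [map_mul]; exact hR x₀ hx₀)
  have hMorth : Mᵀ * M = 1 := transpose_mul_self_eq_one_of_transpose_mul_self_eq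
    ((isUnit_iff_isUnit_det _).2 (hdu x₀ hx₀).ne'.isUnit) (heq x₀ hx₀) hM
  refine ⟨M, c, hMorth, det_eq_one_of_transpose_mul_self_eq_one hMorth ?_, fun x hx i => ?_⟩
  · have := hdv x₀ hx₀
    rw [hM, det_mul] at this
    exact pos_of_mul_pos_left this (hdu x₀ hx₀).le
  · rw [hc x hx]
    simp [mulVec, dotProduct]

/-- **Rigidity of orientation-preserving equidimensional isometric immersions.** If two
`C¹` maps `u, v : Ω → ℝᵈ` on a connected open set induce the same pointwise positive
definite metric `(∇u)ᵀ∇u = (∇v)ᵀ∇v` and are both orientation preserving, then `v = R u + c`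
for a rotation `R ∈ SO(d)` and a vector `c`. -/
theorem equidimensional_rigidity (d : ℕ) (hd : 1 ≤ d)
    (Ω : Set (EuclideanSpace ℝ (Fin d))) (hΩo : IsOpen Ω) (hΩc : IsConnected Ω)
    (u v : EuclideanSpace ℝ (Fin d) → EuclideanSpace ℝ (Fin d))
    (hu : ContDiffOn ℝ 1 u Ω) (hv : ContDiffOn ℝ 1 v Ω)
    (heq : ∀ x ∈ Ω, (Jac u x)ᵀ * Jac u x = (Jac v x)ᵀ * Jac v x)
    (hpos : ∀ x ∈ Ω, ((Jac u x)ᵀ * Jac u x).PosDef)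
    (hdu : ∀ x ∈ Ω, 0 < (Jac u x).det)
    (hdv : ∀ x ∈ Ω, 0 < (Jac v x).det) :
    ∃ (R : Matrix (Fin d) (Fin d) ℝ) (c : Fin d → ℝ),
      Rᵀ * R = 1 ∧ R.det = 1 ∧
      ∀ x ∈ Ω, ∀ i : Fin d, v x i = (∑ j : Fin d, R i j * u x j) + c i :=
  equidimensional_rigidity_general d Ω hΩo hΩc u v hu hv heq hdu hdv
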